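/- Let σ > 0 and let F : ℝ → ℝ be bounded and measurable. Then the perturbation form of the smoothed objective, θ ↦ ∫ F(θ + ε) d(gaussianReal 0 σ²)(ε), is differentiable at every θ ∈ ℝ, and its derivative at θ equals (1/σ²) · ∫ ε · F(θ + ε) d(gaussianReal 0 σ²)(ε). (This is the identity ∇_θ E_{ε∼p}[F(θ + ε)] = E_{ε∼p}[∇_ε log p(ε) · F(θ + ε)] for ε ∼ N(0, σ²), whose score is ∇_ε log p(ε) = ε/σ².) -/

import Mathlib

/-!
Write the objective as `t ↦ ∫ p_t(x) F(x) dx`, where `p_t` is the density of `𝓝(t, σ²)`, and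
differentiate under the integral sign: `∂ₜ p_t(x) = (x - t)/σ² · p_t(x)`. For `|t - θ| ≤ 1` this
derivative is dominated by a multiple of `p'(x) (|x - θ| + 1)`, with `p'` the density of
`𝓝(θ, 2σ²)`, which is integrable because Gaussians have a finite first moment.
-/

open MeasureTheory ProbabilityTheory Real
open scoped NNReal

namespace ProbabilityTheory

variable {E : Type*} [NormedAddCommGroup E] [NormedSpace ℝ E]

lemma integral_gaussianReal_comp_const_add (μ : ℝ) (v : ℝ≥0) (t : ℝ) (g : ℝ → E) :
    ∫ ε, g (t + ε) ∂gaussianReal μ v = ∫ x, g x ∂gaussianReal (μ + t) v := by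
  rw [← gaussianReal_map_const_add t, (measurableEmbedding_addLeft t).integral_map]

lemma hasDerivAt_gaussianPDFReal_mean (v : ℝ≥0) (x t : ℝ) :
    HasDerivAt (fun μ ↦ gaussianPDFReal μ v x) ((x - t) / v * gaussianPDFReal t v x) t := by
  have h_exponent : HasDerivAt (fun μ : ℝ ↦ -(x - μ) ^ 2 / (2 * v)) ((x - t) / v) t := by
    refine (((hasDerivAt_id t).const_sub x).pow 2).neg.div_const (2 * (v : ℝ)) |>.congr_deriv ?_
    simp only [id]
    ring
  refine (h_exponent.exp.const_mul (√(2 * π * v))⁻¹).congr_deriv ?_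
  simp only [gaussianPDFReal]
  ring

lemma gaussianPDFReal_le_of_abs_sub_le_one {v : ℝ≥0} {θ t : ℝ} (ht : |t - θ| ≤ 1) (x : ℝ) :
    gaussianPDFReal t v x ≤ √2 * rexp (1 / (2 * v)) * gaussianPDFReal θ (2 * v) x := by
  rcases eq_or_ne v 0 with rfl | hv
  · simp
  have hv_pos : (0 : ℝ) < v := by positivity
  have h_sq : (x - θ) ^ 2 ≤ 2 * (x - t) ^ 2 + 2 := by
    nlinarith [sq_nonneg (x - 2 * t + θ), abs_le.mp ht]
  have h_exp : rexp (-(x - t) ^ 2 / (2 * v))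
      ≤ rexp (1 / (2 * v)) * rexp (-(x - θ) ^ 2 / (2 * (2 * v))) := by
    rw [← exp_add, exp_le_exp, div_add_div _ _ (by positivity) (by positivity),
      div_le_div_iff₀ (by positivity) (by positivity)]
    nlinarith [mul_le_mul_of_nonneg_left h_sq (by positivity : (0 : ℝ) ≤ 4 * (v : ℝ) ^ 2)]
  have h_sqrt : √(2 * π * ↑(2 * v)) = √2 * √(2 * π * v) := by
    rw [← sqrt_mul zero_le_two]
    push_cast
    ring_nf
  calc gaussianPDFReal t v x
      ≤ (√(2 * π * v))⁻¹ * (rexp (1 / (2 * v)) * rexp (-(x - θ) ^ 2 / (2 * (2 * v)))) :=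
        mul_le_mul_of_nonneg_left h_exp (by positivity)
    _ = √2 * rexp (1 / (2 * v)) * gaussianPDFReal θ (2 * v) x := by
        simp only [gaussianPDFReal, h_sqrt]
        push_cast
        field_simp

lemma abs_sub_mul_gaussianPDFReal_le {v : ℝ≥0} {θ t : ℝ} (ht : |t - θ| ≤ 1) (x : ℝ) :
    |x - t| * gaussianPDFReal t v x
      ≤ √2 * rexp (1 / (2 * v)) * (gaussianPDFReal θ (2 * v) x * (|x - θ| + 1)) := by
  have h_abs : |x - t| ≤ |x - θ| + 1 := by
    calc |x - t| ≤ |x - θ| + |θ - t| := abs_sub_le x θ t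
      _ ≤ |x - θ| + 1 := by rw [abs_sub_comm θ t]; gcongr
  calc |x - t| * gaussianPDFReal t v x
      ≤ (|x - θ| + 1) * (√2 * rexp (1 / (2 * v)) * gaussianPDFReal θ (2 * v) x) :=
        mul_le_mul h_abs (gaussianPDFReal_le_of_abs_sub_le_one ht x)
          (gaussianPDFReal_nonneg _ _ _) (by positivity)
    _ = _ := by ring

lemma norm_sub_div_mul_gaussianPDFReal_smul_le {v : ℝ≥0} {θ t : ℝ} (ht : |t - θ| ≤ 1) (x : ℝ)
    {y : E} {C : ℝ} (hy : ‖y‖ ≤ C) :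
    ‖((x - t) / v * gaussianPDFReal t v x) • y‖
      ≤ √2 * rexp (1 / (2 * v)) * C / v * (gaussianPDFReal θ (2 * v) x * (|x - θ| + 1)) := by
  have h_dom := abs_sub_mul_gaussianPDFReal_le (v := v) ht x
  have h_pdf_nonneg := gaussianPDFReal_nonneg θ (2 * v) x
  calc ‖((x - t) / v * gaussianPDFReal t v x) • y‖
      = |x - t| * gaussianPDFReal t v x * ‖y‖ / v := by
        rw [norm_smul, norm_mul, norm_div, Real.norm_eq_abs, Real.norm_eq_abs, NNReal.abs_eq,
          Real.norm_of_nonneg (gaussianPDFReal_nonneg _ _ _)]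
        ring
    _ ≤ √2 * rexp (1 / (2 * v)) * (gaussianPDFReal θ (2 * v) x * (|x - θ| + 1)) * C / v := by
        gcongr
    _ = _ := by ring

lemma integrable_gaussianPDFReal_smul {μ : ℝ} {v : ℝ≥0} (hv : v ≠ 0) {g : ℝ → E}
    (hg : Integrable g (gaussianReal μ v)) :
    Integrable (fun x ↦ gaussianPDFReal μ v x • g x) := by
  rw [gaussianReal_of_var_ne_zero μ hv, gaussianPDF_def,
    integrable_withDensity_iff_integrable_smul' (by fun_prop)
      (ae_of_all _ fun _ ↦ ENNReal.ofReal_lt_top)] at hg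
  simpa [ENNReal.toReal_ofReal (gaussianPDFReal_nonneg μ v _)] using hg

lemma integrable_abs_sub_add_one_gaussianReal (μ θ : ℝ) (v : ℝ≥0) :
    Integrable (fun x ↦ |x - θ| + 1) (gaussianReal μ v) :=
  (((memLp_id_gaussianReal 1).integrable le_rfl).sub (integrable_const θ)).abs.add
    (integrable_const 1)

theorem hasDerivAt_integral_gaussianReal_mean [CompleteSpace E] {v : ℝ≥0} (hv : v ≠ 0)
    {F : ℝ → E} (hF : AEStronglyMeasurable F) {C : ℝ} (hC : ∀ᵐ x, ‖F x‖ ≤ C) (θ : ℝ) :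
    HasDerivAt (fun t ↦ ∫ x, F x ∂gaussianReal t v)
      ((v : ℝ)⁻¹ • ∫ x, (x - θ) • F x ∂gaussianReal θ v) θ := by
  have hF_int : Integrable F (gaussianReal θ v) :=
    .of_bound (hF.mono_ac (gaussianReal_absolutelyContinuous θ hv)) C
      ((gaussianReal_absolutelyContinuous θ hv).ae_le hC)
  have h_deriv := hasDerivAt_integral_of_dominated_loc_of_deriv_le
    (F := fun t x ↦ gaussianPDFReal t v x • F x)
    (F' := fun t x ↦ ((x - t) / v * gaussianPDFReal t v x) • F x)
    (bound := fun x ↦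
      √2 * rexp (1 / (2 * v)) * C / v * (gaussianPDFReal θ (2 * v) x * (|x - θ| + 1)))
    (Metric.closedBall_mem_nhds θ one_pos)
    (.of_forall fun t ↦ (measurable_gaussianPDFReal t v).aestronglyMeasurable.smul hF)
    (integrable_gaussianPDFReal_smul hv hF_int)
    ((by fun_prop : Measurable fun x ↦ (x - θ) / v * gaussianPDFReal θ v x)
      |>.aestronglyMeasurable.smul hF)
    (hC.mono fun x hCx t ht ↦ norm_sub_div_mul_gaussianPDFReal_smul_le
      (by rwa [Metric.mem_closedBall, Real.dist_eq] at ht) x hCx)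
    (by simpa only [smul_eq_mul] using
      (integrable_gaussianPDFReal_smul (by simpa using hv)
        (integrable_abs_sub_add_one_gaussianReal θ θ (2 * v))).const_mul _)
    (.of_forall fun x t _ ↦ (hasDerivAt_gaussianPDFReal_mean v x t).smul_const (F x))
  have h_value : ∫ x, ((x - θ) / v * gaussianPDFReal θ v x) • F x
      = (v : ℝ)⁻¹ • ∫ x, gaussianPDFReal θ v x • (x - θ) • F x := by
    rw [← integral_smul]
    congr with x
    simp only [smul_smul]
    ring_nf
  simp only [integral_gaussianReal_eq_integral_smul hv]
  exact h_value ▸ h_deriv.2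

end ProbabilityTheory

/-- Perturbation form of the score-function gradient identity:
`θ ↦ ∫ F(θ + ε) d(gaussianReal 0 σ²)(ε)` is differentiable at every `θ` with derivative
`(1/σ²) · ∫ ε · F(θ + ε) d(gaussianReal 0 σ²)(ε)`. -/
theorem perturbed_objective_hasDerivAt_score
    (σ : ℝ) (hσ : 0 < σ) (F : ℝ → ℝ)
    (hF_meas : Measurable F) (hF_bdd : ∃ C : ℝ, ∀ x, |F x| ≤ C) (θ : ℝ) :
    HasDerivAt (fun t : ℝ => ∫ ε, F (t + ε) ∂(gaussianReal 0 (Real.toNNReal (σ ^ 2))))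
      ((1 / σ ^ 2) * ∫ ε, ε * F (θ + ε) ∂(gaussianReal 0 (Real.toNNReal (σ ^ 2)))) θ := by
  obtain ⟨C, hC⟩ := hF_bdd
  have hv : (σ ^ 2).toNNReal ≠ 0 := by simpa using hσ.ne'
  have h_var : ((σ ^ 2).toNNReal : ℝ) = σ ^ 2 := coe_toNNReal _ (by positivity)
  have h_score : ∫ ε, ε * F (θ + ε) ∂gaussianReal 0 (σ ^ 2).toNNReal
      = ∫ x, (x - θ) * F x ∂gaussianReal θ (σ ^ 2).toNNReal := by
    simpa using integral_gaussianReal_comp_const_add 0 _ θ fun x ↦ (x - θ) * F x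
  simp only [integral_gaussianReal_comp_const_add 0 _ _ F, zero_add, h_score, one_div]
  simpa [h_var] using hasDerivAt_integral_gaussianReal_mean hv hF_meas.aestronglyMeasurable
    (C := C) (.of_forall hC) θ
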